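/- arXiv:2202.10950 — 3 statements merged into one kernel-verified Lean document; each statement's English description precedes it below -/
import Mathlib

section
/- In the blockchain challenge-stage mechanism with one legitimate claimant A (with spite parameter θ > 0) and one illegitimate claimant B, if A is selected in the challenge stage then A's unique optimal action is to assert the claim (yielding payoff 0 before fees, versus -θ from withdrawing); consequently B's expected payoff from making a claim is -f < 0, and the unique subgame perfect equilibrium has A as the sole claimant, earning T - f. -/
/-- Expected payoff to the legitimate claimant `A` in the front-running game.
`T` : contract payment, `f` : transaction fee, `θ` : A's spite parameter, `q` :
probability that A is the claimant selected in the challenge stage.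
`cA` : whether A claims; `cB` : B's claiming decision as a function of A's observed
action; `rA`, `rB` : the precontingent challenge actions (`true` = assert, `false` =
withdraw).  If only one claim is made its sender is paid `T`; with two claims the
selected claimant asserts (burning `T`) or withdraws (paying the other claimant). -/
noncomputable def frUA (T f θ q : ℝ) (cA : Bool) (cB : Bool → Bool) (rA rB : Bool) : ℝ :=
  if cA then
    if cB true then
      q * (if rA then -f else -θ - f) + (1 - q) * (if rB then -f else T - f)
    else T - f
  else if cB false then -θ else 0

/-- B's continuation payoff after observing A's claiming action `c`, from choosing to
claim (`d = true`) or not, given the challenge actions `rA`. -/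
noncomputable def frContB (T f q : ℝ) (rA : Bool) (c d : Bool) : ℝ :=
  if c then
    if d then q * (if rA then -f else T - f) + (1 - q) * (-f) else 0
  else if d then T - f else 0

/-! A spiteful legitimate claimant prefers burning the tokens (payoff `0`) to letting an
illegitimate claimant be paid (payoff `-θ`), so whenever selected in the challenge stage
A asserts. A claim by B against A's claim is then never paid and only costs B the fee, so
B stays out whenever A claims; A, anticipating this, claims and collects `T - f`, whereas
not claiming yields at most `0`. -/

lemma eq_true_of_forall_ite_le {θ : ℝ} (hθ : 0 < θ) {rA : Bool}
    (h : ∀ r : Bool, (if r then (0 : ℝ) else -θ) ≤ (if rA then (0 : ℝ) else -θ)) :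
    rA = true := by
  cases rA
  · have := h true
    simp only [ite_true, Bool.false_eq_true, ite_false] at this
    linarith
  · rfl

lemma frContB_claim_against_assert (T f q : ℝ) : frContB T f q true true true = -f := by
  simp only [frContB, ite_true]
  ring

lemma eq_false_of_frContB_best_reply {T f q : ℝ} (hf : 0 < f) {d : Bool}
    (h : frContB T f q true true false ≤ frContB T f q true true d) : d = false := by
  cases d
  · rfl
  · rw [frContB_claim_against_assert] at h
    simp only [frContB, ite_true, Bool.false_eq_true, ite_false] at h
    linarith

lemma frUA_claim_of_unchallenged {T f θ q : ℝ} {cB : Bool → Bool} (hcB : cB true = false)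
    (rA rB : Bool) : frUA T f θ q true cB rA rB = T - f := by
  simp only [frUA, hcB, ite_true, Bool.false_eq_true, ite_false]

lemma frUA_abstain_nonpos {T f θ q : ℝ} (hθ : 0 < θ) (cB : Bool → Bool) (rA rB : Bool) :
    frUA T f θ q false cB rA rB ≤ 0 := by
  simp only [frUA, Bool.false_eq_true, ite_false]
  split_ifs <;> linarith

theorem frontrunning_unique_SPE_general (T f θ q : ℝ)
    (hf : 0 < f) (hfT : f < T) (hθ : 0 < θ)
    (cA : Bool) (cB : Bool → Bool) (rA rB : Bool)
    -- challenge-stage optimality for the selected legitimate claimant A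
    (hrA : ∀ r : Bool, (if r then (0 : ℝ) else -θ) ≤ (if rA then (0 : ℝ) else -θ))
    -- B's claiming decision is optimal after each observed action of A
    (hcB : ∀ c d : Bool, frContB T f q rA c d ≤ frContB T f q rA c (cB c))
    -- A's claiming decision is optimal
    (hcA : ∀ c : Bool, frUA T f θ q c cB rA rB ≤ frUA T f θ q cA cB rA rB) :
    rA = true ∧
      frContB T f q rA true true = -f ∧ (-f : ℝ) < 0 ∧
      cB true = false ∧ cA = true ∧
      frUA T f θ q cA cB rA rB = T - f := by
  obtain rfl : rA = true := eq_true_of_forall_ite_le hθ hrA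
  have hB : cB true = false := eq_false_of_frContB_best_reply hf (hcB true false)
  have hA : cA = true := by
    cases cA
    · have h := hcA true
      rw [frUA_claim_of_unchallenged hB] at h
      linarith [frUA_abstain_nonpos (T := T) (f := f) (q := q) hθ cB true rB]
    · rfl
  subst hA
  exact ⟨rfl, frContB_claim_against_assert T f q, neg_neg_of_pos hf, hB, rfl,
    frUA_claim_of_unchallenged hB true rB⟩

/-- with one legitimate claimant `A` (spite `θ > 0`) and one illegitimate
claimant `B`, fees `0 < f < T`, in any subgame perfect equilibrium: A's challenge action
is the unique optimum assert (payoff `0` vs `-θ` from withdrawing); B's payoff from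
claiming against A's claim is `-f < 0`; hence A is the sole claimant and earns `T - f`. -/
theorem frontrunning_unique_SPE (T f θ q : ℝ)
    (hf : 0 < f) (hfT : f < T) (hθ : 0 < θ) (hq0 : 0 ≤ q) (hq1 : q ≤ 1)
    (cA : Bool) (cB : Bool → Bool) (rA rB : Bool)
    -- challenge-stage optimality for the selected legitimate claimant A
    (hrA : ∀ r : Bool, (if r then (0 : ℝ) else -θ) ≤ (if rA then (0 : ℝ) else -θ))
    -- challenge-stage optimality for the selected illegitimate claimant B (indifferent)
    (hrB : ∀ r : Bool, (if r then (0 : ℝ) else 0) ≤ (if rB then (0 : ℝ) else 0))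
    -- B's claiming decision is optimal after each observed action of A
    (hcB : ∀ c d : Bool, frContB T f q rA c d ≤ frContB T f q rA c (cB c))
    -- A's claiming decision is optimal
    (hcA : ∀ c : Bool, frUA T f θ q c cB rA rB ≤ frUA T f θ q cA cB rA rB) :
    rA = true ∧
      frContB T f q rA true true = -f ∧ (-f : ℝ) < 0 ∧
      cB true = false ∧ cA = true ∧
      frUA T f θ q cA cB rA rB = T - f :=
  frontrunning_unique_SPE_general T f θ q hf hfT hθ cA cB rA rB hrA hcB hcA
end

section
/- In the iterated coalition-elimination procedure for m ≥ 2 claimants (where in each round a subset of roughly half the remaining claimants is selected, and if all selected withdraw they are removed and the procedure repeats on the remainder), if the legitimate claimant always asserts when selected, then the procedure terminates in at most ⌈log₂ m⌉ + 1 rounds with some selected agent asserting, and the tokens are never paid to an illegitimate claimant. -/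
/-!
Removing a selected set of `⌈k/2⌉` withdrawing claimants from a pool of `k` leaves `⌊k/2⌋`, so
after `t` uninterrupted rounds the pool has `⌊m/2^t⌋` members and it is down to at most one by
round `⌈log₂ m⌉`. The legitimate claimant is never in a withdrawing selection, so it survives
every round and is the only possible sole survivor.
-/

open Finset

theorem Finset.card_sdiff_eq_half {α : Type*} [DecidableEq α] {p s : Finset α} (hsp : s ⊆ p)
    (hs : #s = (#p + 1) / 2) : #(p \ s) = #p / 2 := by
  rw [card_sdiff_of_subset hsp, hs]
  omega

namespace CoalitionElimination

variable {α : Type*} [DecidableEq α] (pools sel : ℕ → Finset α) (asserts : α → Bool)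

def Continues (t : ℕ) : Prop :=
  1 < #(pools t) ∧ ∀ i ∈ sel t, asserts i = false

variable {pools sel asserts}

theorem card_pools_eq_div_pow
    (hsel : ∀ t, 1 < #(pools t) → sel t ⊆ pools t ∧ #(sel t) = (#(pools t) + 1) / 2)
    (hstep : ∀ t, Continues pools sel asserts t → pools (t + 1) = pools t \ sel t) :
    ∀ t, (∀ s < t, Continues pools sel asserts s) → #(pools t) = #(pools 0) / 2 ^ t
  | 0, _ => by simp
  | t + 1, hcont => by
    have ht := hcont t t.lt_succ_self
    obtain ⟨hsub, hcard⟩ := hsel t ht.1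
    rw [hstep t ht, card_sdiff_eq_half hsub hcard,
      card_pools_eq_div_pow hsel hstep t fun s hs => hcont s (hs.trans t.lt_succ_self),
      Nat.div_div_eq_div_mul, ← pow_succ]

theorem mem_pools_of_asserts {legit : α} (hassert : asserts legit = true)
    (h0 : legit ∈ pools 0)
    (hstep : ∀ t, Continues pools sel asserts t → pools (t + 1) = pools t \ sel t) :
    ∀ t, (∀ s < t, Continues pools sel asserts s) → legit ∈ pools t
  | 0, _ => h0
  | t + 1, hcont => by
    have ht := hcont t t.lt_succ_self
    have hnotsel : legit ∉ sel t := fun hsel => by simpa [hassert] using ht.2 legit hsel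
    rw [hstep t ht, mem_sdiff]
    exact ⟨mem_pools_of_asserts hassert h0 hstep t fun s hs => hcont s (hs.trans t.lt_succ_self),
      hnotsel⟩

theorem exists_not_continues_le_clog
    (hsel : ∀ t, 1 < #(pools t) → sel t ⊆ pools t ∧ #(sel t) = (#(pools t) + 1) / 2)
    (hstep : ∀ t, Continues pools sel asserts t → pools (t + 1) = pools t \ sel t) :
    ∃ t ≤ Nat.clog 2 #(pools 0), ¬Continues pools sel asserts t := by
  by_contra! hcont
  have hshrunk : #(pools 0) / 2 ^ Nat.clog 2 #(pools 0) ≤ 1 :=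
    Nat.div_le_of_le_mul (by simpa using Nat.le_pow_clog one_lt_two #(pools 0))
  have hlarge := (hcont _ le_rfl).1
  rw [card_pools_eq_div_pow hsel hstep _ fun s hs => hcont s hs.le] at hlarge
  omega

end CoalitionElimination

open CoalitionElimination in
theorem coalition_elimination_terminates_general (m : ℕ) (legit : Fin m)
    (pools sel : ℕ → Finset (Fin m)) (asserts : Fin m → Bool)
    (h0 : pools 0 = Finset.univ)
    (hassert : asserts legit = true)
    (hsel : ∀ t, 1 < (pools t).card →
      sel t ⊆ pools t ∧ (sel t).card = ((pools t).card + 1) / 2)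
    (hstep : ∀ t, (1 < (pools t).card ∧ ∀ i ∈ sel t, asserts i = false) →
      pools (t + 1) = pools t \ sel t) :
    (∃ t ≤ Nat.clog 2 m + 1,
        ¬(1 < (pools t).card ∧ ∀ i ∈ sel t, asserts i = false)) ∧
      (∀ t, (∀ s < t, 1 < (pools s).card ∧ ∀ i ∈ sel s, asserts i = false) →
        legit ∈ pools t ∧ ((pools t).card = 1 → pools t = {legit})) := by
  constructor
  · obtain ⟨t, ht, hstop⟩ := exists_not_continues_le_clog (asserts := asserts) hsel hstep
    rw [h0, card_univ, Fintype.card_fin] at ht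
    exact ⟨t, ht.trans (Nat.le_succ _), hstop⟩
  · intro t hcont
    have hmem := mem_pools_of_asserts hassert (h0 ▸ mem_univ legit) hstep t hcont
    exact ⟨hmem, fun hone =>
      (eq_of_subset_of_card_le (singleton_subset_iff.2 hmem) (by simp [hone])).symm⟩

/-- the iterated coalition-elimination procedure.  A pool of `m ≥ 2`
claimants contains exactly one legitimate claimant, who asserts whenever selected
(`asserts legit = true`).  In each round with current pool of size `k > 1`, a subset of
size `⌈k/2⌉` of the pool is selected; if any selected agent asserts the tokens are burned
and the process ends; if all selected agents withdraw they are removed and the process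
repeats; a pool of size 1 means its sole member is paid.  `pools t` is the pool at round
`t` and `sel t` the selected subset; the round-`t` continuation condition is
`1 < (pools t).card ∧ ∀ i ∈ sel t, asserts i = false`.  Then: (i)–(ii) the process halts
within `⌈log₂ m⌉ + 1` rounds; (iii) as long as the process runs, the legitimate claimant
remains in the pool, so if the pool ever reaches size 1 its sole member is the
legitimate claimant — the tokens are never paid to an illegitimate claimant. -/
theorem coalition_elimination_terminates (m : ℕ) (hm : 2 ≤ m) (legit : Fin m)
    (pools sel : ℕ → Finset (Fin m)) (asserts : Fin m → Bool)
    (h0 : pools 0 = Finset.univ)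
    (hassert : asserts legit = true)
    (hsel : ∀ t, 1 < (pools t).card →
      sel t ⊆ pools t ∧ (sel t).card = ((pools t).card + 1) / 2)
    (hstep : ∀ t, (1 < (pools t).card ∧ ∀ i ∈ sel t, asserts i = false) →
      pools (t + 1) = pools t \ sel t) :
    (∃ t ≤ Nat.clog 2 m + 1,
        ¬(1 < (pools t).card ∧ ∀ i ∈ sel t, asserts i = false)) ∧
      (∀ t, (∀ s < t, 1 < (pools s).card ∧ ∀ i ∈ sel s, asserts i = false) →
        legit ∈ pools t ∧ ((pools t).card = 1 → pools t = {legit})) :=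
  coalition_elimination_terminates_general m legit pools sel asserts h0 hassert hsel hstep
end

section
/- In the blockchain challenge mechanism, if the legitimate claimant precommits (at claim-submission time) a contingent challenge-stage response, then asserting is a weakly dominant precommitment even when θ = 0, and it is strictly dominant when θ > 0 or when withdrawing requires an additional fee ε > 0; under either strict condition, no illegitimate claimant participates in equilibrium. -/
/-- Expected payoff of the legitimate claimant who, at claim-submission time, precommits
the contingent challenge-stage plan `r` (`true` = assert, costless because precommitted;
`false` = withdraw, which requires an additional message fee `ε`), when the illegitimate
claimant claims with probability `s`, selection in a dispute is uniform (probability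
`1/2` each), and the illegitimate claimant's own challenge action when selected is
`bAct` (`true` = assert, burning `T`; `false` = withdraw, paying the legitimate
claimant).  Gross payoffs of the legitimate claimant: `T` if paid, `-θ` if the
illegitimate claimant is paid, `0` if the tokens are burned; every claim costs `f`. -/
noncomputable def precommitUA (T f θ ε : ℝ) (r : Bool) (s : ℝ) (bAct : Bool) : ℝ :=
  (1 - s) * (T - f) +
    s * ((1 / 2) * (if r then -f else -θ - f - ε) +
         (1 / 2) * (if bAct then -f else T - f))

theorem precommitUA_true_sub_false (T f θ ε s : ℝ) (bAct : Bool) :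
    precommitUA T f θ ε true s bAct - precommitUA T f θ ε false s bAct = s / 2 * (θ + ε) := by
  simp only [precommitUA, if_true, Bool.false_eq_true, if_false]
  ring

theorem precommitted_assert_dominates_general (T f θ ε : ℝ)
    (hf : 0 < f) (hθ : 0 ≤ θ) (hε : 0 ≤ ε) :
    (∀ s : ℝ, 0 ≤ s → s ≤ 1 → ∀ bAct : Bool,
      precommitUA T f θ ε false s bAct ≤ precommitUA T f θ ε true s bAct) ∧
    ((0 < θ ∨ 0 < ε) → ∀ s : ℝ, 0 < s → s ≤ 1 → ∀ bAct : Bool,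
      precommitUA T f θ ε false s bAct < precommitUA T f θ ε true s bAct) ∧
    -- the illegitimate claimant, facing the 'assert' precommitment, gets `-f` from
    -- claiming (selected or not, the tokens are never paid to them) and `0` otherwise,
    -- so any optimal claiming decision is to abstain
    ((1 / 2) * (-f) + (1 / 2) * (-f) = -f ∧ (-f : ℝ) < 0 ∧
      ((0 < θ ∨ 0 < ε) → ∀ claimB : Bool,
        (∀ d : Bool, (if d then -f else (0 : ℝ)) ≤ (if claimB then -f else 0)) →
          claimB = false)) := by
  refine ⟨fun s hs _ bAct => ?_, fun hpos s hs _ bAct => ?_, by ring, neg_lt_zero.mpr hf,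
    fun _ claimB hopt => ?_⟩
  · rw [← sub_nonneg, precommitUA_true_sub_false]
    exact mul_nonneg (by linarith) (add_nonneg hθ hε)
  · rw [← sub_pos, precommitUA_true_sub_false]
    exact mul_pos (half_pos hs) (by rcases hpos with h | h <;> linarith)
  · cases claimB with
    | false => rfl
    | true => exact absurd (hopt false) (by simpa using hf)

/-- with precommitted challenge responses, (i) 'assert' is a weakly dominant
precommitment for the legitimate claimant even when `θ = 0`; (ii) it is strictly better
than 'withdraw' against any claiming strategy used with positive probability whenever
`θ > 0` or the withdrawal message fee `ε > 0`; (iii) given the 'assert' precommitment,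
the illegitimate claimant's payoff from claiming is `-f < 0` versus `0` from abstaining,
so under either strict condition the illegitimate claimant's unique best response is not
to participate. -/
theorem precommitted_assert_dominates (T f θ ε : ℝ)
    (hf : 0 < f) (hfT : f < T) (hθ : 0 ≤ θ) (hε : 0 ≤ ε) :
    (∀ s : ℝ, 0 ≤ s → s ≤ 1 → ∀ bAct : Bool,
      precommitUA T f θ ε false s bAct ≤ precommitUA T f θ ε true s bAct) ∧
    ((0 < θ ∨ 0 < ε) → ∀ s : ℝ, 0 < s → s ≤ 1 → ∀ bAct : Bool,
      precommitUA T f θ ε false s bAct < precommitUA T f θ ε true s bAct) ∧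
    -- the illegitimate claimant, facing the 'assert' precommitment, gets `-f` from
    -- claiming (selected or not, the tokens are never paid to them) and `0` otherwise,
    -- so any optimal claiming decision is to abstain
    ((1 / 2) * (-f) + (1 / 2) * (-f) = -f ∧ (-f : ℝ) < 0 ∧
      ((0 < θ ∨ 0 < ε) → ∀ claimB : Bool,
        (∀ d : Bool, (if d then -f else (0 : ℝ)) ≤ (if claimB then -f else 0)) →
          claimB = false)) :=
  precommitted_assert_dominates_general T f θ ε hf hθ hε
end
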